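/- Let T be a tournament on a finite vertex set, let k be a nonnegative integer, let A' be a DESC-set of T with |A'| ≤ k, and let T' = T − A'. Let A and B be distinct strong components of T' such that there is a directed path in T' from some vertex of A to some vertex of B. Then for every vertex a of A and every vertex b of B, d⁺_T(a) − d⁺_T(b) ≥ (|A| + |B|)/2 − (k + 1); in particular d⁺_T(b) − d⁺_T(a) ≤ k. -/

import Mathlib

/-!
Digraphs on a finite vertex type `V` are modelled by their arc sets
`D : Finset (V × V)`, where `(x, y) ∈ D` means there is an arc from `x` to `y`.
-/

namespace DescPaper

variable {V : Type*} [Fintype V] [DecidableEq V]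

/-- The out-degree of `x` in the digraph `D`. -/
def outDeg (D : Finset (V × V)) (x : V) : ℕ :=
  (D.filter (fun a => a.1 = x)).card

/-- The in-degree of `x` in the digraph `D`. -/
def inDeg (D : Finset (V × V)) (x : V) : ℕ :=
  (D.filter (fun a => a.2 = x)).card

/-- The number of arcs of `D` from `x` to a vertex of `Y`. -/
def outDegInto (D : Finset (V × V)) (x : V) (Y : Finset V) : ℕ :=
  (D.filter (fun a => a.1 = x ∧ a.2 ∈ Y)).card

/-- The subgraph of `D` induced by the vertex set `X`. -/
def induce (D : Finset (V × V)) (X : Finset V) : Finset (V × V) :=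
  D.filter (fun a => a.1 ∈ X ∧ a.2 ∈ X)

/-- Reachability by a directed path in the digraph `D`. -/
def Reach (D : Finset (V × V)) : V → V → Prop :=
  Relation.ReflTransGen (fun u v => (u, v) ∈ D)

/-- The subgraph of `D` induced by `X` is strongly connected. -/
def StronglyConnectedOn (D : Finset (V × V)) (X : Finset V) : Prop :=
  ∀ x ∈ X, ∀ y ∈ X, Reach (induce D X) x y

/-- `X` is the vertex set of a strong component of `D`:
a maximal (nonempty) vertex set inducing a strongly connected subgraph. -/
def IsStrongComponent (D : Finset (V × V)) (X : Finset V) : Prop :=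
  X.Nonempty ∧ StronglyConnectedOn D X ∧
    ∀ Y : Finset V, X ⊆ Y → StronglyConnectedOn D Y → Y = X

/-- The digraph `D` is balanced: every vertex has equal in- and out-degree. -/
def IsBalanced (D : Finset (V × V)) : Prop :=
  ∀ x : V, outDeg D x = inDeg D x

/-- The subgraph of `D` induced by `X` is Eulerian:
strongly connected and balanced. -/
def EulerianOn (D : Finset (V × V)) (X : Finset V) : Prop :=
  StronglyConnectedOn D X ∧ IsBalanced (induce D X)

/-- `A'` is a DESC-set of `D`: a set of arcs of `D` such that every strong
component of `D - A'` is Eulerian. -/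
def IsDESC (D A' : Finset (V × V)) : Prop :=
  A' ⊆ D ∧ ∀ X : Finset V, IsStrongComponent (D \ A') X → EulerianOn (D \ A') X

/-- `desc D` is the minimum size of a DESC-set of `D`. -/
noncomputable def desc (D : Finset (V × V)) : ℕ :=
  sInf {n | ∃ A' : Finset (V × V), IsDESC D A' ∧ A'.card = n}

/-- `T` is a tournament: no loops, and for every pair of distinct vertices
exactly one of the two possible arcs is present. -/
def IsTournament (T : Finset (V × V)) : Prop :=
  (∀ x : V, (x, x) ∉ T) ∧ ∀ x y : V, x ≠ y → ((x, y) ∈ T ↔ (y, x) ∉ T)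

/-- `dstar A' X Y` is the number of arcs of `A'` with one endpoint in `X`
and the other endpoint in `Y` (in either direction). -/
def dstar (A' : Finset (V × V)) (X Y : Finset V) : ℕ :=
  (A'.filter (fun a => (a.1 ∈ X ∧ a.2 ∈ Y) ∨ (a.1 ∈ Y ∧ a.2 ∈ X))).card

end DescPaper

open DescPaper

/-!
Split the vertices into `A`, `B` and the rest `R`, and compare the arcs of `T` leaving `a` and
`b` class by class. Since `T - A'` is balanced on `A` and on `B`, inside its own component `a`
beats about half of `A` and `b` about half of `B`, up to arcs of `A'` at `a` resp. `b`. Since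
`T - A'` has no path from `B` back to `A`, every arc from `B` to `a`, every arc from `b` into `A`,
and one arc of every path `b → r → a` with `r ∈ R` lies in `A'`. This gives
`2 (d⁺(a) - d⁺(b)) ≥ |A| + |B| - 2 (d⁻_{A'}(a) + d⁺_{A'}(b))`, and only the arc `ba` can be
counted in both `d⁻_{A'}(a)` and `d⁺_{A'}(b)`, so the last sum is at most `|A'| + 1`.
-/

open Finset

namespace DescPaper

variable {V : Type*}

section Reach

variable {D : Finset (V × V)}

lemma Reach.mono {E : Finset (V × V)} (h : D ⊆ E) {x y : V} (hxy : Reach D x y) :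
    Reach E x y :=
  Relation.ReflTransGen.mono (fun _ _ huv => h huv) x y hxy

variable [DecidableEq V]

lemma StronglyConnectedOn.reach {X : Finset V} (hX : StronglyConnectedOn D X) {x y : V}
    (hx : x ∈ X) (hy : y ∈ X) : Reach D x y :=
  (hX x hx y hy).mono (filter_subset _ _)

variable [Fintype V]

/-- The vertices mutually reachable with `x` induce a strongly connected subgraph, so by
maximality a strong component through `x` contains all of them. -/
lemma IsStrongComponent.mem_of_reach {X : Finset V} (hX : IsStrongComponent D X) {x y : V}
    (hx : x ∈ X) (hxy : Reach D x y) (hyx : Reach D y x) : y ∈ X := by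
  classical
  set M : Finset V := {z | Reach D x z ∧ Reach D z x}
  have hM : StronglyConnectedOn D M := by
    intro u hu v hv
    simp only [M, mem_filter, mem_univ, true_and] at hu hv
    obtain ⟨hxu, hux⟩ := hu
    obtain ⟨hxv, hvx⟩ := hv
    have huv : Reach D u v := hux.trans hxv
    clear hux hxv
    induction huv using Relation.ReflTransGen.head_induction_on with
    | refl => exact .refl
    | @head p q hpq hqv ih =>
      have hxq : Reach D x q := hxu.tail hpq
      refine .head (mem_filter.2 ⟨hpq, ?_, ?_⟩) (ih hxq)
      · simpa [M] using ⟨hxu, (hqv.trans hvx).head hpq⟩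
      · simpa [M] using ⟨hxq, hqv.trans hvx⟩
  have hXM : X ⊆ M := fun z hz => by
    simpa [M] using ⟨hX.2.1.reach hx hz, hX.2.1.reach hz hx⟩
  rw [← hX.2.2 M hXM hM]
  simpa [M] using ⟨hxy, hyx⟩

lemma IsStrongComponent.subset_of_mem {X Y : Finset V} (hX : IsStrongComponent D X)
    (hY : IsStrongComponent D Y) {x : V} (hxX : x ∈ X) (hxY : x ∈ Y) : Y ⊆ X :=
  fun _ hy => hX.mem_of_reach hxX (hY.2.1.reach hxY hy) (hY.2.1.reach hy hxY)

lemma IsStrongComponent.disjoint {X Y : Finset V} (hX : IsStrongComponent D X)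
    (hY : IsStrongComponent D Y) (hne : X ≠ Y) : Disjoint X Y :=
  disjoint_left.2 fun _ hxX hxY =>
    hne ((hY.subset_of_mem hX hxY hxX).antisymm (hX.subset_of_mem hY hxX hxY))

lemma IsStrongComponent.not_reach {X Y : Finset V} (hX : IsStrongComponent D X)
    (hY : IsStrongComponent D Y) (hne : X ≠ Y) {x₀ y₀ : V} (hx₀ : x₀ ∈ X) (hy₀ : y₀ ∈ Y)
    (h₀ : Reach D x₀ y₀) {x y : V} (hx : x ∈ X) (hy : y ∈ Y) : ¬ Reach D y x := fun hyx =>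
  have hxy : Reach D x y := ((hX.2.1.reach hx hx₀).trans h₀).trans (hY.2.1.reach hy₀ hy)
  disjoint_left.1 (hX.disjoint hY hne) (hX.mem_of_reach hx hxy hyx) hy

end Reach

section Counting

variable [DecidableEq V]

lemma card_filter_le_card_filter_add {Y : Finset V} {p q r : V → Prop} [DecidablePred p]
    [DecidablePred q] [DecidablePred r] (h : ∀ y ∈ Y, p y → q y ∨ r y) :
    #{y ∈ Y | p y} ≤ #{y ∈ Y | q y} + #{y ∈ Y | r y} :=
  (card_le_card ((monotone_filter_right Y h).trans (filter_or ..).le)).trans (card_union_le _ _)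

lemma card_filter_mem_le_sdiff_add (T A' : Finset (V × V)) (Y : Finset V) (f : V → V × V) :
    #{y ∈ Y | f y ∈ T} ≤ #{y ∈ Y | f y ∈ T \ A'} + #{y ∈ Y | f y ∈ A'} :=
  card_filter_le_card_filter_add fun _ _ hy => or_iff_not_imp_right.2 fun h => mem_sdiff.2 ⟨hy, h⟩

lemma card_filter_mem_le_of_forall_notMem_sdiff {T A' : Finset (V × V)} {Y : Finset V}
    {f : V → V × V} (h : ∀ y ∈ Y, f y ∉ T \ A') :
    #{y ∈ Y | f y ∈ T} ≤ #{y ∈ Y | f y ∈ A'} := by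
  have := card_filter_mem_le_sdiff_add T A' Y f
  rwa [filter_eq_empty_iff.2 h, card_empty, zero_add] at this

variable (D : Finset (V × V)) (x : V)

lemma card_filter_fst_eq (Y : Finset V) :
    #{p ∈ D | p.1 = x ∧ p.2 ∈ Y} = #{y ∈ Y | (x, y) ∈ D} :=
  card_bij' (fun p _ => p.2) (fun y _ => (x, y)) (by aesop) (by aesop) (by aesop) (by aesop)

lemma card_filter_snd_eq (Y : Finset V) :
    #{p ∈ D | p.2 = x ∧ p.1 ∈ Y} = #{y ∈ Y | (y, x) ∈ D} :=
  card_bij' (fun p _ => p.1) (fun y _ => (y, x)) (by aesop) (by aesop) (by aesop) (by aesop)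

lemma outDeg_induce {X : Finset V} (hx : x ∈ X) :
    outDeg (induce D X) x = #{y ∈ X | (x, y) ∈ D} := by
  rw [← card_filter_fst_eq, outDeg, induce, filter_filter]
  congr 1
  apply filter_congr
  aesop

lemma inDeg_induce {X : Finset V} (hx : x ∈ X) :
    inDeg (induce D X) x = #{y ∈ X | (y, x) ∈ D} := by
  rw [← card_filter_snd_eq, inDeg, induce, filter_filter]
  congr 1
  apply filter_congr
  aesop

variable [Fintype V]

lemma outDeg_eq_card : outDeg D x = #{y | (x, y) ∈ D} := by
  rw [← card_filter_fst_eq, outDeg]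
  simp

lemma inDeg_eq_card : inDeg D x = #{y | (y, x) ∈ D} := by
  rw [← card_filter_snd_eq, inDeg]
  simp

lemma card_filter_eq_add_add_compl {A B : Finset V} (hAB : Disjoint A B) (p : V → Prop)
    [DecidablePred p] :
    #{y | p y} = #{y ∈ A | p y} + #{y ∈ B | p y} + #{y ∈ (A ∪ B)ᶜ | p y} := by
  rw [← card_union_of_disjoint (disjoint_filter_filter hAB), ← filter_union,
    ← card_union_of_disjoint (disjoint_filter_filter disjoint_compl_right), ← filter_union,
    union_compl]

end Counting

section Tournament

variable [DecidableEq V] {T A' : Finset (V × V)}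

lemma IsTournament.card_out_add_card_in (hT : IsTournament T) (x : V) (Y : Finset V) :
    #{y ∈ Y | (x, y) ∈ T} + #{y ∈ Y | (y, x) ∈ T} = #(Y.erase x) := by
  rw [← card_union_of_disjoint, ← filter_or]
  · congr 1
    ext y
    by_cases hyx : y = x
    · subst hyx; simp [hT.1]
    · have := hT.2 x y (Ne.symm hyx)
      simp only [mem_filter, mem_erase]
      tauto
  · refine disjoint_filter.2 fun y _ hxy hyx => ?_
    obtain rfl | hne := eq_or_ne x y
    · exact hT.1 x hxy
    · exact (hT.2 x y hne).1 hxy hyx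

lemma card_in_le_card_out_add {X : Finset V} {x : V} (hx : x ∈ X)
    (hbal : outDeg (induce (T \ A') X) x = inDeg (induce (T \ A') X) x) :
    #{y ∈ X | (y, x) ∈ T} ≤ #{y ∈ X | (x, y) ∈ T} + #{y ∈ X | (y, x) ∈ A'} := by
  rw [outDeg_induce _ _ hx, inDeg_induce _ _ hx] at hbal
  calc #{y ∈ X | (y, x) ∈ T}
      ≤ #{y ∈ X | (y, x) ∈ T \ A'} + #{y ∈ X | (y, x) ∈ A'} :=
        card_filter_mem_le_sdiff_add T A' X (·, x)
    _ = #{y ∈ X | (x, y) ∈ T \ A'} + #{y ∈ X | (y, x) ∈ A'} := by rw [hbal]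
    _ ≤ #{y ∈ X | (x, y) ∈ T} + #{y ∈ X | (y, x) ∈ A'} := by
      gcongr
      exact sdiff_subset

lemma card_out_le_card_in_add {X : Finset V} {x : V} (hx : x ∈ X)
    (hbal : outDeg (induce (T \ A') X) x = inDeg (induce (T \ A') X) x) :
    #{y ∈ X | (x, y) ∈ T} ≤ #{y ∈ X | (y, x) ∈ T} + #{y ∈ X | (x, y) ∈ A'} := by
  rw [outDeg_induce _ _ hx, inDeg_induce _ _ hx] at hbal
  calc #{y ∈ X | (x, y) ∈ T}
      ≤ #{y ∈ X | (x, y) ∈ T \ A'} + #{y ∈ X | (x, y) ∈ A'} :=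
        card_filter_mem_le_sdiff_add T A' X (x, ·)
    _ = #{y ∈ X | (y, x) ∈ T \ A'} + #{y ∈ X | (x, y) ∈ A'} := by rw [hbal]
    _ ≤ #{y ∈ X | (y, x) ∈ T} + #{y ∈ X | (x, y) ∈ A'} := by
      gcongr
      exact sdiff_subset

lemma IsTournament.card_out_le_of_no_two_path (hT : IsTournament T) {R : Finset V} {a b : V}
    (ha : a ∉ R) (h : ∀ r ∈ R, (b, r) ∈ T \ A' → (r, a) ∉ T \ A') :
    #{r ∈ R | (b, r) ∈ T} ≤
      #{r ∈ R | (a, r) ∈ T} + #{r ∈ R | (r, a) ∈ A'} + #{r ∈ R | (b, r) ∈ A'} :=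
  (card_filter_mem_le_sdiff_add T A' R _).trans <| Nat.add_le_add_right
    (card_filter_le_card_filter_add fun r hr hbr => or_iff_not_imp_right.2 fun hra =>
      (hT.2 a r fun h => ha (h ▸ hr)).2 fun hrat => h r hr hbr (mem_sdiff.2 ⟨hrat, hra⟩)) _

end Tournament

lemma inDeg_add_outDeg_le [DecidableEq V] (D : Finset (V × V)) (a b : V) :
    inDeg D a + outDeg D b ≤ #D + 1 := by
  rw [inDeg, outDeg, ← card_union_add_card_inter]
  gcongr
  · exact union_subset (filter_subset _ _) (filter_subset _ _)
  · refine card_le_one.2 fun p hp q hq => ?_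
    simp only [mem_inter, mem_filter] at hp hq
    exact Prod.ext (hp.2.2.trans hq.2.2.symm) (hp.1.2.trans hq.1.2.symm)

lemma card_add_card_add_two_mul_outDeg_le [Fintype V] [DecidableEq V]
    {T A' : Finset (V × V)} (hT : IsTournament T) {A B : Finset V} (hAB : Disjoint A B)
    {a b : V} (ha : a ∈ A) (hb : b ∈ B)
    (hbalA : outDeg (induce (T \ A') A) a = inDeg (induce (T \ A') A) a)
    (hbalB : outDeg (induce (T \ A') B) b = inDeg (induce (T \ A') B) b)
    (hBA : ∀ y ∈ B, ∀ x ∈ A, ¬ Reach (T \ A') y x) :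
    #A + #B + 2 * outDeg T b ≤ 2 * outDeg T a + 2 * (inDeg A' a + outDeg A' b) := by
  have hTa := card_filter_eq_add_add_compl hAB (fun y => (a, y) ∈ T)
  have hTb := card_filter_eq_add_add_compl hAB (fun y => (b, y) ∈ T)
  have hA'a := card_filter_eq_add_add_compl hAB (fun y => (y, a) ∈ A')
  have hA'b := card_filter_eq_add_add_compl hAB (fun y => (b, y) ∈ A')
  rw [← outDeg_eq_card] at hTa hTb hA'b
  rw [← inDeg_eq_card] at hA'a
  have hAa := card_erase_add_one ha
  have hBb := card_erase_add_one hb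
  rw [← hT.card_out_add_card_in] at hAa hBb
  have hBa := hT.card_out_add_card_in a B
  rw [erase_eq_of_notMem (disjoint_left.1 hAB ha)] at hBa
  have hinA := card_in_le_card_out_add ha hbalA
  have houtB := card_out_le_card_in_add hb hbalB
  have hBa' : #{y ∈ B | (y, a) ∈ T} ≤ #{y ∈ B | (y, a) ∈ A'} :=
    card_filter_mem_le_of_forall_notMem_sdiff fun y hy h => hBA y hy a ha (.single h)
  have hbA' : #{y ∈ A | (b, y) ∈ T} ≤ #{y ∈ A | (b, y) ∈ A'} :=
    card_filter_mem_le_of_forall_notMem_sdiff fun y hy h => hBA b hb y hy (.single h)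
  have hR := hT.card_out_le_of_no_two_path (R := (A ∪ B)ᶜ) (by simp [ha])
    fun r _ hbr hra => hBA b hb a ha ((Relation.ReflTransGen.single hbr).tail hra)
  omega

end DescPaper

theorem stmt12 {V : Type*} [Fintype V] [DecidableEq V]
    (T A' : Finset (V × V)) (k : ℕ)
    (hT : IsTournament T) (hDESC : IsDESC T A') (hk : A'.card ≤ k)
    (A B : Finset V)
    (hA : IsStrongComponent (T \ A') A) (hB : IsStrongComponent (T \ A') B)
    (hne : A ≠ B)
    (hpath : ∃ a ∈ A, ∃ b ∈ B, Reach (T \ A') a b) :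
    ∀ a ∈ A, ∀ b ∈ B,
      ((A.card : ℚ) + B.card) / 2 - (k + 1) ≤ (outDeg T a : ℚ) - outDeg T b ∧
      (outDeg T b : ℚ) - outDeg T a ≤ k := by
  intro a ha b hb
  obtain ⟨a₀, ha₀, b₀, hb₀, h₀⟩ := hpath
  have hdeg := card_add_card_add_two_mul_outDeg_le hT (hA.disjoint hB hne) ha hb
    ((hDESC.2 A hA).2 a) ((hDESC.2 B hB).2 b)
    fun y hy x hx => hA.not_reach hB hne ha₀ hb₀ h₀ hx hy
  have hA' := inDeg_add_outDeg_le A' a b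
  have hAB : (#A + #B + 2 * outDeg T b : ℚ) ≤ 2 * outDeg T a + 2 * (k + 1) := by
    exact_mod_cast (by omega : #A + #B + 2 * outDeg T b ≤ 2 * outDeg T a + 2 * (k + 1))
  have hApos : (1 : ℚ) ≤ #A := by exact_mod_cast card_pos.2 hA.1
  have hBpos : (1 : ℚ) ≤ #B := by exact_mod_cast card_pos.2 hB.1
  constructor <;> linarith
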